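/- arXiv:2405.03115 — 8 statements merged into one kernel-verified Lean document; each statement's English description precedes it below -/
import Mathlib

section
/- Let G be a graph on n vertices, M a positive semidefinite real symmetric n×n matrix indexed by V(G) with (M)_{ij} x_i x_j ≤ 0 for all nonadjacent distinct i, j, and x ∈ R(M) a vector with all entries nonzero. Then for every independent set S of G, |S|² ≤ (xᵀ M# x) · Σ_{u∈S} (M)_{uu}/x_u². -/
/-!
Cauchy–Schwarz for the semi-inner product `⟨a, b⟩ = aᵀ M b`, applied to `y` with `x = M y` and to
the vector `z` with `z u = 1 / x u` on `S` and `0` elsewhere: `⟨z, y⟩ = zᵀ x = |S|`,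
`⟨y, y⟩ = xᵀ M# x` because `M M# M = M`, and `⟨z, z⟩ = Σ_{u,v ∈ S} M_uv / (x_u x_v)` is at most its
diagonal part because `S` is independent, so every off-diagonal term is `≤ 0`.
-/

open Matrix Finset

namespace Matrix

variable {ι : Type*} [Fintype ι]

theorem PosSemidef.dotProduct_mulVec_sq_le {M : Matrix ι ι ℝ} (hM : M.PosSemidef) (a b : ι → ℝ) :
    (a ⬝ᵥ M *ᵥ b) ^ 2 ≤ (a ⬝ᵥ M *ᵥ a) * (b ⬝ᵥ M *ᵥ b) := by
  let := M.toSeminormedAddCommGroup hM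
  let := M.toInnerProductSpace hM
  have hinner (c d : ι → ℝ) : inner ℝ c d = c ⬝ᵥ M *ᵥ d := by
    change (M *ᵥ d) ⬝ᵥ star c = _
    rw [star_trivial, dotProduct_comm]
  have key := real_inner_mul_inner_self_le a b
  simp only [hinner] at key
  nlinarith [key]

theorem IsSymm.mulVec_dotProduct_mulVec_mulVec_of_mul_mul_eq {R : Type*} [CommSemiring R]
    {M X : Matrix ι ι R} (hM : M.IsSymm) (hMXM : M * X * M = M) (y : ι → R) :
    M *ᵥ y ⬝ᵥ X *ᵥ (M *ᵥ y) = y ⬝ᵥ M *ᵥ y := by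
  have hsym : M *ᵥ y ⬝ᵥ X *ᵥ (M *ᵥ y) = y ⬝ᵥ M *ᵥ (X *ᵥ (M *ᵥ y)) := by
    rw [dotProduct_mulVec y, ← mulVec_transpose, hM.eq]
  rw [hsym, mulVec_mulVec, mulVec_mulVec, hMXM]

end Matrix

section InvIndicator

variable {ι : Type*} [Fintype ι] [DecidableEq ι]

noncomputable def invIndicator (S : Finset ι) (x : ι → ℝ) : ι → ℝ :=
  fun u => if u ∈ S then (x u)⁻¹ else 0

theorem invIndicator_dotProduct {S : Finset ι} {x : ι → ℝ} (hx : ∀ u ∈ S, x u ≠ 0) :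
    invIndicator S x ⬝ᵥ x = #S := by
  simp only [dotProduct, invIndicator, ite_mul, zero_mul, sum_ite_mem, univ_inter]
  rw [sum_congr rfl fun u hu => inv_mul_cancel₀ (hx u hu)]
  simp

theorem invIndicator_dotProduct_mulVec_le {S : Finset ι} {x : ι → ℝ} {M : Matrix ι ι ℝ}
    (hoff : ∀ u ∈ S, ∀ v ∈ S, u ≠ v → M u v * x u * x v ≤ 0) :
    invIndicator S x ⬝ᵥ M *ᵥ invIndicator S x ≤ ∑ u ∈ S, M u u / x u ^ 2 := by
  have hexpand : invIndicator S x ⬝ᵥ M *ᵥ invIndicator S x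
      = ∑ u ∈ S, ∑ v ∈ S, M u v * (x u)⁻¹ * (x v)⁻¹ := by
    simp only [dotProduct, mulVec, invIndicator, mul_ite, mul_zero, ite_mul, zero_mul,
      sum_ite_mem, univ_inter]
    simp only [mul_sum]
    exact sum_congr rfl fun u _ => sum_congr rfl fun v _ => by ring
  rw [hexpand]
  refine sum_le_sum fun u hu => ?_
  rw [← add_sum_erase _ _ hu]
  have hoff_row : ∑ v ∈ S.erase u, M u v * (x u)⁻¹ * (x v)⁻¹ ≤ 0 := by
    refine sum_nonpos fun v hv => ?_
    have hsign := hoff u hu v (mem_of_mem_erase hv) (ne_of_mem_erase hv).symm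
    -- `a⁻¹ * a⁻¹ * a = a⁻¹` holds also for `a = 0`
    have hrescale : M u v * (x u)⁻¹ * (x v)⁻¹
        = M u v * x u * x v * ((x u)⁻¹ ^ 2 * (x v)⁻¹ ^ 2) := by
      have hu' := mul_self_mul_inv (x u)⁻¹
      have hv' := mul_self_mul_inv (x v)⁻¹
      rw [inv_inv] at hu' hv'
      linear_combination (-M u v) * ((x v)⁻¹ ^ 2 * x v) * hu' - M u v * (x u)⁻¹ * hv'
    rw [hrescale]
    exact mul_nonpos_of_nonpos_of_nonneg hsign (by positivity)
  have hdiag : M u u * (x u)⁻¹ * (x u)⁻¹ = M u u / x u ^ 2 := by ring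
  linarith

end InvIndicator

theorem stmt3_general (n : ℕ) (G : SimpleGraph (Fin n)) (M : Matrix (Fin n) (Fin n) ℝ)
    (hM : M.PosSemidef) (x : Fin n → ℝ)
    (hxR : ∃ y : Fin n → ℝ, M.mulVec y = x) (hx : ∀ u, x u ≠ 0)
    (hnonadj : ∀ i j, i ≠ j → ¬ G.Adj i j → M i j * x i * x j ≤ 0)
    (X : Matrix (Fin n) (Fin n) ℝ)
    (h1 : M * X * M = M)
    (S : Finset (Fin n)) (hS : ∀ u ∈ S, ∀ v ∈ S, u ≠ v → ¬ G.Adj u v) :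
    (S.card : ℝ) ^ 2 ≤ (x ⬝ᵥ X.mulVec x) * ∑ u ∈ S, M u u / (x u) ^ 2 := by
  obtain ⟨y, rfl⟩ := hxR
  set z := invIndicator S (M *ᵥ y)
  have hzy : z ⬝ᵥ M *ᵥ y = #S := invIndicator_dotProduct fun u _ => hx u
  have hzz : z ⬝ᵥ M *ᵥ z ≤ ∑ u ∈ S, M u u / (M *ᵥ y) u ^ 2 :=
    invIndicator_dotProduct_mulVec_le fun u hu v hv huv => hnonadj u v huv (hS u hu v hv huv)
  have hyy : M *ᵥ y ⬝ᵥ X *ᵥ (M *ᵥ y) = y ⬝ᵥ M *ᵥ y :=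
    (isHermitian_iff_isSymm.mp hM.1).mulVec_dotProduct_mulVec_mulVec_of_mul_mul_eq h1 y
  rw [hyy, mul_comm]
  calc (#S : ℝ) ^ 2 = (z ⬝ᵥ M *ᵥ y) ^ 2 := by rw [hzy]
    _ ≤ (z ⬝ᵥ M *ᵥ z) * (y ⬝ᵥ M *ᵥ y) := hM.dotProduct_mulVec_sq_le z y
    _ ≤ (∑ u ∈ S, M u u / (M *ᵥ y) u ^ 2) * (y ⬝ᵥ M *ᵥ y) := by
      gcongr
      simpa using hM.dotProduct_mulVec_nonneg y

/-- Theorem 3.1(1), inequality: for (M,x) ∈ 𝒫(G) and an independent set S of G,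
|S|² ≤ (xᵀ M# x) · Σ_{u∈S} M_{uu}/x_u². Here X is the group inverse of M. -/
theorem stmt3 (n : ℕ) (G : SimpleGraph (Fin n)) (M : Matrix (Fin n) (Fin n) ℝ)
    (hM : M.PosSemidef) (x : Fin n → ℝ)
    (hxR : ∃ y : Fin n → ℝ, M.mulVec y = x) (hx : ∀ u, x u ≠ 0)
    (hnonadj : ∀ i j, i ≠ j → ¬ G.Adj i j → M i j * x i * x j ≤ 0)
    (X : Matrix (Fin n) (Fin n) ℝ)
    (h1 : M * X * M = M) (h2 : X * M * X = X) (h3 : M * X = X * M)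
    (S : Finset (Fin n)) (hS : ∀ u ∈ S, ∀ v ∈ S, u ≠ v → ¬ G.Adj u v) :
    (S.card : ℝ) ^ 2 ≤ (x ⬝ᵥ X.mulVec x) * ∑ u ∈ S, M u u / (x u) ^ 2 :=
  stmt3_general n G M hM x hxR hx hnonadj X h1 S hS
end

section
/- Let G be a graph on n vertices, M a positive semidefinite real symmetric matrix indexed by V(G) with (M)_{ij} x_i x_j ≤ 0 for nonadjacent distinct i, j, and x ∈ R(M) totally nonzero. Then the independence number satisfies α(G) ≤ (xᵀ M# x) · max_{u∈V(G)} (M)_{uu}/x_u². -/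
open Matrix Finset

/-- The independence number of a finite simple graph. -/
noncomputable def indepNum {V : Type*} [Fintype V] (G : SimpleGraph V) : ℕ :=
  sSup {k | ∃ S : Finset V, (∀ u ∈ S, ∀ v ∈ S, u ≠ v → ¬ G.Adj u v) ∧ S.card = k}

/-!
Write `x = M y` and let `S` be a maximum independent set. The test vector `z = 1_S / x` has
`z ⬝ x = |S|`, and since the off-diagonal terms `M_uv / (x_u x_v)` with `u, v ∈ S` are
nonpositive, `zᵀ M z ≤ |S| · max_u M_uu / x_u²`. Cauchy–Schwarz for the semi-inner product
defined by `M` gives `|S|² = (zᵀ M y)² ≤ (zᵀ M z)(yᵀ M y)`, and `yᵀ M y = xᵀ M# x`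
because `M M# M = M`.
-/

lemma div_nonpos_of_mul_nonpos {𝕜 : Type*} [Field 𝕜] [LinearOrder 𝕜] [IsStrictOrderedRing 𝕜]
    {a b : 𝕜} (h : a * b ≤ 0) : a / b ≤ 0 := by
  rw [div_eq_mul_inv, ← div_self_mul_self', mul_div_assoc']
  exact div_nonpos_of_nonpos_of_nonneg h (mul_self_nonneg b)

lemma Matrix.PosSemidef.isSymm_real {ι : Type*} {M : Matrix ι ι ℝ} (hM : M.PosSemidef) :
    M.IsSymm :=
  (conjTranspose_eq_transpose_of_trivial M).symm.trans hM.isHermitian.eq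

section

variable {ι : Type*} [Fintype ι]

lemma Matrix.IsSymm.dotProduct_mulVec_eq {R : Type*} [CommSemiring R] {M : Matrix ι ι R}
    (hM : M.IsSymm) (a b : ι → R) : a ⬝ᵥ M *ᵥ b = M *ᵥ a ⬝ᵥ b := by
  rw [dotProduct_mulVec, ← vecMul_transpose, hM.eq]

lemma Matrix.PosSemidef.dotProduct_mulVec_sq_le_s4 {M : Matrix ι ι ℝ} (hM : M.PosSemidef)
    (a b : ι → ℝ) : (a ⬝ᵥ M *ᵥ b) ^ 2 ≤ (a ⬝ᵥ M *ᵥ a) * (b ⬝ᵥ M *ᵥ b) := by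
  classical
  have hba : b ⬝ᵥ M *ᵥ a = a ⬝ᵥ M *ᵥ b := by
    rw [hM.isSymm_real.dotProduct_mulVec_eq, dotProduct_comm]
  simpa only [toBilin'_apply', hba, ← sq] using
    LinearMap.BilinForm.apply_mul_apply_le_of_forall_zero_le (toBilin' M)
      (fun v => by simpa only [toBilin'_apply', star_trivial] using hM.dotProduct_mulVec_nonneg v) a b

lemma Matrix.IsSymm.mulVec_dotProduct_mulVec_of_mul_mul_eq {R : Type*} [CommSemiring R]
    {M X : Matrix ι ι R} (hM : M.IsSymm) (hMXM : M * X * M = M) (y : ι → R) :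
    M *ᵥ y ⬝ᵥ X *ᵥ (M *ᵥ y) = y ⬝ᵥ M *ᵥ y := by
  rw [← hM.dotProduct_mulVec_eq, mulVec_mulVec, mulVec_mulVec, hMXM]

lemma indicator_inv_dotProduct (x f : ι → ℝ) (S : Finset ι) :
    (S : Set ι).indicator x⁻¹ ⬝ᵥ f = ∑ u ∈ S, f u / x u := by
  classical
  simp [dotProduct, Set.indicator_apply, ite_mul, sum_ite_mem, div_eq_inv_mul]

lemma indicator_inv_dotProduct_self {x : ι → ℝ} {S : Finset ι} (hx : ∀ u ∈ S, x u ≠ 0) :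
    (S : Set ι).indicator x⁻¹ ⬝ᵥ x = #S := by
  rw [indicator_inv_dotProduct, card_eq_sum_ones, Nat.cast_sum, Nat.cast_one]
  exact sum_congr rfl fun u hu => div_self (hx u hu)

lemma indicator_inv_dotProduct_mulVec_le {M : Matrix ι ι ℝ} {x : ι → ℝ} {S : Finset ι}
    (hS : ∀ u ∈ S, ∀ v ∈ S, u ≠ v → M u v * x u * x v ≤ 0) :
    (S : Set ι).indicator x⁻¹ ⬝ᵥ M *ᵥ (S : Set ι).indicator x⁻¹ ≤ ∑ u ∈ S, M u u / x u ^ 2 := by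
  classical
  rw [indicator_inv_dotProduct]
  refine sum_le_sum fun u hu => ?_
  have hoff : ∀ v ∈ S.erase u, M u v / (x u * x v) ≤ 0 := fun v hv => by
    obtain ⟨hvu, hv⟩ := mem_erase.1 hv
    exact div_nonpos_of_mul_nonpos (by simpa only [mul_assoc] using hS u hu v hv hvu.symm)
  calc (M *ᵥ (S : Set ι).indicator x⁻¹) u / x u = ∑ v ∈ S, M u v / (x u * x v) := by
        rw [mulVec, dotProduct_comm, indicator_inv_dotProduct, sum_div]
        simp only [div_div, mul_comm]
    _ = M u u / x u ^ 2 + ∑ v ∈ S.erase u, M u v / (x u * x v) := by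
        rw [← add_sum_erase S _ hu, sq]
    _ ≤ M u u / x u ^ 2 := add_le_of_nonpos_right (sum_nonpos hoff)

lemma exists_card_eq_indepNum {V : Type*} [Fintype V] (G : SimpleGraph V) :
    ∃ S : Finset V, (∀ u ∈ S, ∀ v ∈ S, u ≠ v → ¬ G.Adj u v) ∧ #S = indepNum G := by
  show indepNum G ∈ {k | ∃ S : Finset V, (∀ u ∈ S, ∀ v ∈ S, u ≠ v → ¬ G.Adj u v) ∧ #S = k}
  refine Nat.sSup_mem ⟨0, ∅, by simp⟩ ⟨Fintype.card V, ?_⟩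
  rintro k ⟨S, -, rfl⟩
  exact S.card_le_univ

end

theorem stmt4_general (n : ℕ) (G : SimpleGraph (Fin n)) (M : Matrix (Fin n) (Fin n) ℝ)
    (hM : M.PosSemidef) (x : Fin n → ℝ)
    (hxR : ∃ y : Fin n → ℝ, M.mulVec y = x) (hx : ∀ u, x u ≠ 0)
    (hnonadj : ∀ i j, i ≠ j → ¬ G.Adj i j → M i j * x i * x j ≤ 0)
    (X : Matrix (Fin n) (Fin n) ℝ)
    (h1 : M * X * M = M) :
    (indepNum G : ℝ) ≤ (x ⬝ᵥ X.mulVec x) * ⨆ u : Fin n, M u u / (x u) ^ 2 := by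
  obtain ⟨y, rfl⟩ := hxR
  obtain ⟨S, hSind, hScard⟩ := exists_card_eq_indepNum G
  set c := ⨆ u : Fin n, M u u / (M *ᵥ y) u ^ 2
  have hc : 0 ≤ c := Real.iSup_nonneg fun u => div_nonneg hM.diag_nonneg (sq_nonneg _)
  have hq : 0 ≤ y ⬝ᵥ M *ᵥ y := by simpa only [star_trivial] using hM.dotProduct_mulVec_nonneg y
  set z := (S : Set (Fin n)).indicator (M *ᵥ y)⁻¹
  have hzMz : z ⬝ᵥ M *ᵥ z ≤ #S * c := by
    refine (indicator_inv_dotProduct_mulVec_le fun u hu v hv huv =>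
      hnonadj u v huv (hSind u hu v hv huv)).trans ?_
    simpa only [nsmul_eq_mul] using sum_le_card_nsmul S _ c fun u _ =>
      le_ciSup (Set.finite_range _).bddAbove u
  have hS : (#S : ℝ) ^ 2 ≤ #S * c * (y ⬝ᵥ M *ᵥ y) :=
    calc (#S : ℝ) ^ 2 = (z ⬝ᵥ M *ᵥ y) ^ 2 := by rw [indicator_inv_dotProduct_self fun u _ => hx u]
      _ ≤ (z ⬝ᵥ M *ᵥ z) * (y ⬝ᵥ M *ᵥ y) := hM.dotProduct_mulVec_sq_le_s4 z y
      _ ≤ #S * c * (y ⬝ᵥ M *ᵥ y) := by gcongr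
  rw [← hScard, hM.isSymm_real.mulVec_dotProduct_mulVec_of_mul_mul_eq h1]
  nlinarith [mul_nonneg hq hc]

/-- Theorem 3.1(2), inequality: for (M,x) ∈ 𝒫(G),
α(G) ≤ (xᵀ M# x) · max_u M_{uu}/x_u², where X is the group inverse of M. -/
theorem stmt4 (n : ℕ) (G : SimpleGraph (Fin n)) (M : Matrix (Fin n) (Fin n) ℝ)
    (hM : M.PosSemidef) (x : Fin n → ℝ)
    (hxR : ∃ y : Fin n → ℝ, M.mulVec y = x) (hx : ∀ u, x u ≠ 0)
    (hnonadj : ∀ i j, i ≠ j → ¬ G.Adj i j → M i j * x i * x j ≤ 0)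
    (X : Matrix (Fin n) (Fin n) ℝ)
    (h1 : M * X * M = M) (h2 : X * M * X = X) (h3 : M * X = X * M) :
    (indepNum G : ℝ) ≤ (x ⬝ᵥ X.mulVec x) * ⨆ u : Fin n, M u u / (x u) ^ 2 :=
  stmt4_general n G M hM x hxR hx hnonadj X h1
end

section
/- Let G be a connected graph with Laplacian matrix L. Then for every vector x with all entries nonzero and Σ_{u∈V(G)} x_u = 0, α(G) ≤ (xᵀ L# x) · max_{u∈V(G)} L_{uu}/x_u². -/
/-!
Since `G` is connected, `x ⊥ 𝟙` lies in the range of `L`, say `x = L y`, and then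
`xᵀ L# x = yᵀ L L# L y = yᵀ L y = ∑_{uv ∈ E} (y_u - y_v)²` for any generalized inverse `L#`.
At each vertex `x_u = ∑_{v ∼ u} (y_u - y_v)`, so by Cauchy–Schwarz
`x_u² ≤ d_u ∑_{v ∼ u} (y_u - y_v)²`, i.e. `1 ≤ M ∑_{v ∼ u} (y_u - y_v)²` with
`M = max_u d_u / x_u²`. Summed over an independent set `S`, the right-hand sides count every
edge at most once, giving `|S| ≤ M · yᵀ L y`.
-/

open scoped Classical
open Matrix Finset

theorem Finset.two_nsmul_sum_sum_le_sum_sum {ι R : Type*} [Fintype ι] [DecidableEq ι]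
    [AddCommMonoid R] [PartialOrder R] [IsOrderedAddMonoid R] {f : ι → ι → R} {s : Finset ι}
    (hf : ∀ i j, 0 ≤ f i j) (hsymm : ∀ i j, f i j = f j i) (hs : ∀ i ∈ s, ∀ j ∈ s, f i j = 0) :
    2 • ∑ i ∈ s, ∑ j, f i j ≤ ∑ i, ∑ j, f i j := by
  have hout : ∀ i ∈ s, ∑ j, f i j = ∑ j ∈ sᶜ, f i j := fun i hi => by
    rw [← sum_add_sum_compl s, sum_eq_zero (hs i hi), zero_add]
  calc 2 • ∑ i ∈ s, ∑ j, f i j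
      = ∑ i ∈ s, ∑ j ∈ sᶜ, f i j + ∑ i ∈ sᶜ, ∑ j ∈ s, f i j := by
        rw [two_nsmul, sum_congr rfl hout, sum_comm (s := sᶜ)]
        simp_rw [hsymm _ _]
    _ ≤ ∑ i ∈ s, ∑ j, f i j + ∑ i ∈ sᶜ, ∑ j, f i j := by gcongr <;> simp [hf]
    _ = ∑ i, ∑ j, f i j := sum_add_sum_compl s _

theorem Matrix.dotProduct_mulVec_mulVec_of_mul_mul_eq {n R : Type*} [Fintype n] [CommSemiring R]
    {A X : Matrix n n R} (hA : Aᵀ = A) (hX : A * X * A = A) (y : n → R) :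
    (A *ᵥ y) ⬝ᵥ X *ᵥ (A *ᵥ y) = y ⬝ᵥ A *ᵥ y := by
  rw [dotProduct_comm, dotProduct_mulVec, ← mulVec_transpose, hA, mulVec_mulVec, mulVec_mulVec, hX,
    dotProduct_comm]

theorem exists_isIndepSet_card_eq_indepNum {V : Type*} [Fintype V] (G : SimpleGraph V) :
    ∃ S : Finset V, G.IsIndepSet (S : Set V) ∧ S.card = indepNum G := by
  obtain ⟨S, hS, hcard⟩ := Nat.sSup_mem (s := {k | ∃ S : Finset V,
      (∀ u ∈ S, ∀ v ∈ S, u ≠ v → ¬ G.Adj u v) ∧ S.card = k})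
    ⟨0, ∅, by simp⟩ ⟨Fintype.card V, fun _ ⟨S, _, hS⟩ => hS ▸ S.card_le_univ⟩
  exact ⟨S, fun u hu v hv => hS u hu v hv, hcard⟩

namespace SimpleGraph

variable {V : Type*} [Fintype V] [DecidableEq V] {G : SimpleGraph V} [DecidableRel G.Adj]

theorem lapMatrix_apply_self {R : Type*} [AddGroupWithOne R] (u : V) :
    G.lapMatrix R u u = G.degree u := by
  simp [lapMatrix, degMatrix]

theorem lapMatrix_mulVec_apply_eq_sum_sub {R : Type*} [CommRing R] (y : V → R) (u : V) :
    (G.lapMatrix R *ᵥ y) u = ∑ v ∈ G.neighborFinset u, (y u - y v) := by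
  rw [lapMatrix_mulVec_apply, sum_sub_distrib, sum_const, card_neighborFinset_eq_degree,
    nsmul_eq_mul]

theorem sq_lapMatrix_mulVec_apply_le {R : Type*} [CommRing R] [LinearOrder R]
    [IsStrictOrderedRing R] (y : V → R) (u : V) :
    (G.lapMatrix R *ᵥ y) u ^ 2 ≤ G.degree u * ∑ v ∈ G.neighborFinset u, (y u - y v) ^ 2 := by
  rw [lapMatrix_mulVec_apply_eq_sum_sub, ← card_neighborFinset_eq_degree]
  exact sq_sum_le_card_mul_sum_sq

theorem one_le_mul_sum_neighborFinset_sq {R : Type*} [Field R] [LinearOrder R]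
    [IsStrictOrderedRing R] {y : V → R} {u : V} {M : R} (hu : (G.lapMatrix R *ᵥ y) u ≠ 0)
    (hM : G.degree u / (G.lapMatrix R *ᵥ y) u ^ 2 ≤ M) :
    1 ≤ M * ∑ v ∈ G.neighborFinset u, (y u - y v) ^ 2 := by
  have hpos : 0 < (G.lapMatrix R *ᵥ y) u ^ 2 := by positivity
  rw [div_le_iff₀ hpos] at hM
  refine le_of_mul_le_mul_left ?_ hpos
  calc (G.lapMatrix R *ᵥ y) u ^ 2 * 1
      ≤ G.degree u * ∑ v ∈ G.neighborFinset u, (y u - y v) ^ 2 := by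
        simpa using G.sq_lapMatrix_mulVec_apply_le y u
    _ ≤ M * (G.lapMatrix R *ᵥ y) u ^ 2 * ∑ v ∈ G.neighborFinset u, (y u - y v) ^ 2 := by
        gcongr
    _ = (G.lapMatrix R *ᵥ y) u ^ 2 * (M * ∑ v ∈ G.neighborFinset u, (y u - y v) ^ 2) := by ring

theorem sum_sum_neighborFinset_sq_le_of_isIndepSet {R : Type*} [Field R] [LinearOrder R]
    [IsStrictOrderedRing R] {S : Finset V} (hS : G.IsIndepSet (S : Set V)) (y : V → R) :
    ∑ u ∈ S, ∑ v ∈ G.neighborFinset u, (y u - y v) ^ 2 ≤ y ⬝ᵥ G.lapMatrix R *ᵥ y := by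
  set f : V → V → R := fun u v => if G.Adj u v then (y u - y v) ^ 2 else 0
  have hquad : y ⬝ᵥ G.lapMatrix R *ᵥ y = (∑ u, ∑ v, f u v) / 2 := by
    rw [← toLinearMap₂'_apply', lapMatrix_toLinearMap₂']
  have hneighbor : ∀ u, ∑ v ∈ G.neighborFinset u, (y u - y v) ^ 2 = ∑ v, f u v := fun u => by
    rw [neighborFinset_eq_filter, sum_filter]
  have hedges := two_nsmul_sum_sum_le_sum_sum (s := S) (f := f)
    (fun u v => by positivity) (fun u v => by simp only [f, G.adj_comm u v]; split <;> ring)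
    (fun u hu v hv => if_neg fun huv => hS hu hv huv.ne huv)
  rw [hquad, sum_congr rfl fun u _ => hneighbor u, le_div_iff₀ two_pos, mul_two, ← two_nsmul]
  exact hedges

theorem finrank_ker_toLin'_lapMatrix_of_connected (hG : G.Connected) :
    Module.finrank ℝ (LinearMap.ker (G.lapMatrix ℝ).toLin') = 1 := by
  have := hG.preconnected.subsingleton_connectedComponent
  have : Nonempty G.ConnectedComponent := hG.nonempty.map G.connectedComponentMk
  rw [← card_connectedComponent_eq_finrank_ker_toLin'_lapMatrix]
  exact le_antisymm (Fintype.card_le_one_iff_subsingleton.mpr ‹_›) Fintype.card_pos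

theorem vecMul_lapMatrix_const_eq_zero {R : Type*} [CommRing R] :
    (fun _ => 1 : V → R) ᵥ* G.lapMatrix R = 0 := by
  rw [← mulVec_transpose, G.isSymm_lapMatrix R, lapMatrix_mulVec_const_eq_zero]

/-- The range of `L` lies in the hyperplane `∑ u, x u = 0`, and both have dimension `|V| - 1`
since the kernel of `L` is spanned by the constant vectors. -/
theorem exists_lapMatrix_mulVec_eq_of_sum_eq_zero (hG : G.Connected) {x : V → ℝ}
    (hx : ∑ u, x u = 0) : ∃ y, G.lapMatrix ℝ *ᵥ y = x := by
  set total : Module.Dual ℝ (V → ℝ) := dotProductBilin ℝ ℝ (fun _ => 1)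
  have htotal : total ≠ 0 := by
    obtain ⟨u⟩ := hG.nonempty
    exact fun h => by simpa [total] using LinearMap.congr_fun h (Pi.single u 1)
  have hrange : LinearMap.range (G.lapMatrix ℝ).toLin' = LinearMap.ker total := by
    refine Submodule.eq_of_le_of_finrank_eq ?_ ?_
    · rintro _ ⟨y, rfl⟩
      simp [total, dotProduct_mulVec, vecMul_lapMatrix_const_eq_zero]
    · have h1 := LinearMap.finrank_range_add_finrank_ker (G.lapMatrix ℝ).toLin'
      have h2 := total.finrank_ker_add_one_of_ne_zero htotal
      rw [finrank_ker_toLin'_lapMatrix_of_connected hG] at h1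
      omega
  obtain ⟨y, hy⟩ : x ∈ LinearMap.range (G.lapMatrix ℝ).toLin' := by
    rw [hrange, LinearMap.mem_ker]
    simpa [total, dotProduct] using hx
  exact ⟨y, hy⟩

end SimpleGraph

theorem stmt8_general (n : ℕ) (G : SimpleGraph (Fin n)) (hconn : G.Connected)
    (L : Matrix (Fin n) (Fin n) ℝ) (hL : L = G.lapMatrix ℝ)
    (X : Matrix (Fin n) (Fin n) ℝ)
    (h1 : L * X * L = L)
    (x : Fin n → ℝ) (hx : ∀ u, x u ≠ 0) (hsum : ∑ u : Fin n, x u = 0) :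
    (indepNum G : ℝ) ≤ (x ⬝ᵥ X.mulVec x) * ⨆ u : Fin n, L u u / (x u) ^ 2 := by
  subst hL
  obtain ⟨S, hS, hcard⟩ := exists_isIndepSet_card_eq_indepNum G
  obtain ⟨y, rfl⟩ := G.exists_lapMatrix_mulVec_eq_of_sum_eq_zero hconn hsum
  rw [dotProduct_mulVec_mulVec_of_mul_mul_eq (G.isSymm_lapMatrix ℝ) h1, ← hcard]
  set M := ⨆ u, G.lapMatrix ℝ u u / (G.lapMatrix ℝ *ᵥ y) u ^ 2
  have hvertex : ∀ u, 1 ≤ M * ∑ v ∈ G.neighborFinset u, (y u - y v) ^ 2 := fun u =>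
    G.one_le_mul_sum_neighborFinset_sq (hx u) <| by
      rw [← SimpleGraph.lapMatrix_apply_self]
      exact le_ciSup (f := fun u => G.lapMatrix ℝ u u / (G.lapMatrix ℝ *ᵥ y) u ^ 2)
        (Finite.bddAbove_range _) u
  have hM : 0 ≤ M := Real.iSup_nonneg fun u => by rw [SimpleGraph.lapMatrix_apply_self]; positivity
  calc (S.card : ℝ) = ∑ u ∈ S, 1 := by simp
    _ ≤ ∑ u ∈ S, M * ∑ v ∈ G.neighborFinset u, (y u - y v) ^ 2 := sum_le_sum fun u _ => hvertex u
    _ = M * ∑ u ∈ S, ∑ v ∈ G.neighborFinset u, (y u - y v) ^ 2 := (mul_sum ..).symm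
    _ ≤ M * (y ⬝ᵥ G.lapMatrix ℝ *ᵥ y) := by
        gcongr
        exact G.sum_sum_neighborFinset_sq_le_of_isIndepSet hS y
    _ = _ := mul_comm ..

/-- Corollary 3.5: for a connected graph G with Laplacian L and any totally nonzero
vector x summing to 0, α(G) ≤ (xᵀ L# x) · max_u L_{uu}/x_u², where X is the group
inverse of L. -/
theorem stmt8 (n : ℕ) (G : SimpleGraph (Fin n)) (hconn : G.Connected)
    (L : Matrix (Fin n) (Fin n) ℝ) (hL : L = G.lapMatrix ℝ)
    (X : Matrix (Fin n) (Fin n) ℝ)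
    (h1 : L * X * L = L) (h2 : X * L * X = X) (h3 : L * X = X * L)
    (x : Fin n → ℝ) (hx : ∀ u, x u ≠ 0) (hsum : ∑ u : Fin n, x u = 0) :
    (indepNum G : ℝ) ≤ (x ⬝ᵥ X.mulVec x) * ⨆ u : Fin n, L u u / (x u) ^ 2 :=
  stmt8_general n G hconn L hL X h1 x hx hsum
end

section
/- Let G be a graph with adjacency matrix A and suppose A + λI is positive definite for some λ > 0. Then α(G) ≤ λ · eᵀ (A + λI)⁻¹ e, where e is the all-ones vector, with equality if and only if there exists an independent set C such that every vertex not in C is adjacent to exactly λ vertices of C. -/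
/-!
For a positive definite `M` and any vectors `b`, `x`,
`bᵀM⁻¹b - (2 bᵀx - xᵀMx) = (x - M⁻¹b)ᵀ M (x - M⁻¹b) ≥ 0`, with equality iff `Mx = b`.
Take `M = A + λI`, `b = λe` and `x = 1_S` for an independent set `S`: then `xᵀAx = 0`, so the
left-hand side is `λ² eᵀM⁻¹e - λ|S|`. This bounds every independent set, with equality iff
`M 1_S = λe`, i.e. iff every vertex outside `S` has exactly `λ` neighbours in `S`.
-/

open scoped Classical
open Matrix Finset

theorem indepNum_eq_indepNum {V : Type*} [Fintype V] (G : SimpleGraph V) :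
    indepNum G = G.indepNum := by
  simp only [indepNum, SimpleGraph.indepNum, SimpleGraph.isNIndepSet_iff]
  rfl

namespace Matrix

theorem mulVec_eq_iff_eq_inv_mulVec {n α : Type*} [Fintype n] [DecidableEq n] [CommRing α]
    {M : Matrix n n α} (hu : IsUnit M.det) {x b : n → α} :
    M *ᵥ x = b ↔ x = M⁻¹ *ᵥ b := by
  constructor <;> rintro rfl
  · rw [mulVec_mulVec, nonsing_inv_mul M hu, one_mulVec]
  · rw [mulVec_mulVec, mul_nonsing_inv M hu, one_mulVec]

theorem PosDef.isSymm {n : Type*} {M : Matrix n n ℝ} (hM : M.PosDef) : M.IsSymm :=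
  isHermitian_iff_isSymm.1 hM.isHermitian

theorem PosDef.dotProduct_mulVec_self_eq_zero_iff {n : Type*} [Fintype n] {M : Matrix n n ℝ}
    (hM : M.PosDef) {x : n → ℝ} : x ⬝ᵥ M *ᵥ x = 0 ↔ x = 0 := by
  refine ⟨fun h => ?_, fun h => by simp [h]⟩
  by_contra hx
  simpa [h] using hM.dotProduct_mulVec_pos hx

variable {n : Type*} [Fintype n] [DecidableEq n] {M : Matrix n n ℝ}

theorem IsSymm.dotProduct_inv_mulVec_sub_eq (hM : M.IsSymm) (hu : IsUnit M.det)
    (b x : n → ℝ) :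
    b ⬝ᵥ M⁻¹ *ᵥ b - (2 * (b ⬝ᵥ x) - x ⬝ᵥ M *ᵥ x) =
      (x - M⁻¹ *ᵥ b) ⬝ᵥ M *ᵥ (x - M⁻¹ *ᵥ b) := by
  set z := M⁻¹ *ᵥ b
  have hMz : M *ᵥ z = b := (mulVec_eq_iff_eq_inv_mulVec hu).2 rfl
  have hzM : z ⬝ᵥ M *ᵥ x = b ⬝ᵥ x := by
    rw [dotProduct_mulVec, ← mulVec_transpose, hM.eq, hMz]
  simp only [mulVec_sub, dotProduct_sub, sub_dotProduct, hMz, hzM, dotProduct_comm z b,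
    dotProduct_comm x b]
  ring

theorem PosDef.two_mul_dotProduct_sub_le (hM : M.PosDef) (b x : n → ℝ) :
    2 * (b ⬝ᵥ x) - x ⬝ᵥ M *ᵥ x ≤ b ⬝ᵥ M⁻¹ *ᵥ b := by
  have hgap := hM.isSymm.dotProduct_inv_mulVec_sub_eq (hM.isUnit.map detMonoidHom) b x
  have hnonneg := hM.posSemidef.dotProduct_mulVec_nonneg (x - M⁻¹ *ᵥ b)
  rw [star_trivial] at hnonneg
  linarith

theorem PosDef.two_mul_dotProduct_sub_eq_iff (hM : M.PosDef) (b x : n → ℝ) :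
    2 * (b ⬝ᵥ x) - x ⬝ᵥ M *ᵥ x = b ⬝ᵥ M⁻¹ *ᵥ b ↔ M *ᵥ x = b := by
  have hu : IsUnit M.det := hM.isUnit.map detMonoidHom
  rw [← sub_eq_zero, ← neg_eq_zero, neg_sub, hM.isSymm.dotProduct_inv_mulVec_sub_eq hu,
    hM.dotProduct_mulVec_self_eq_zero_iff, sub_eq_zero, mulVec_eq_iff_eq_inv_mulVec hu]

end Matrix

namespace SimpleGraph

variable {V : Type*} (G : SimpleGraph V) {S : Finset V}

theorem filter_adj_eq_empty_of_isIndepSet [DecidableRel G.Adj] (hS : G.IsIndepSet S) {v : V}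
    (hv : v ∈ S) : {u ∈ S | G.Adj v u} = ∅ :=
  filter_eq_empty_iff.2 fun _ hu hvu => hS hv hu hvu.ne hvu

variable [Fintype V] [DecidableEq V] [DecidableRel G.Adj]

theorem adjMatrix_mulVec_indicator_apply {R : Type*} [NonAssocSemiring R] (S : Finset V)
    (v : V) : (G.adjMatrix R *ᵥ (S : Set V).indicator 1) v = #{u ∈ S | G.Adj v u} := by
  simp only [adjMatrix_mulVec_apply, Set.indicator_apply, mem_coe, Pi.one_apply, sum_boole]
  congr 2
  ext u
  simp [and_comm]

theorem one_dotProduct_indicator {R : Type*} [NonAssocSemiring R] (S : Finset V) :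
    (fun _ => (1 : R)) ⬝ᵥ (S : Set V).indicator 1 = #S := by
  simp [dotProduct, Set.indicator_apply]

variable (lam : ℝ)

theorem adjMatrix_add_smul_one_mulVec_indicator_apply (S : Finset V) (v : V) :
    ((G.adjMatrix ℝ + lam • 1) *ᵥ (S : Set V).indicator 1) v =
      #{u ∈ S | G.Adj v u} + lam * (S : Set V).indicator 1 v := by
  rw [add_mulVec, smul_mulVec, one_mulVec, Pi.add_apply, adjMatrix_mulVec_indicator_apply,
    Pi.smul_apply, smul_eq_mul]

theorem indicator_dotProduct_mulVec_indicator_of_isIndepSet (hS : G.IsIndepSet S) :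
    (S : Set V).indicator 1 ⬝ᵥ (G.adjMatrix ℝ + lam • 1) *ᵥ (S : Set V).indicator 1 =
      lam * #S := by
  calc (S : Set V).indicator 1 ⬝ᵥ (G.adjMatrix ℝ + lam • 1) *ᵥ (S : Set V).indicator 1
      = ∑ v ∈ S, ((G.adjMatrix ℝ + lam • 1) *ᵥ (S : Set V).indicator 1) v := by
        simp [dotProduct, Set.indicator_apply]
    _ = ∑ v ∈ S, lam := sum_congr rfl fun v hv => by
        simp [adjMatrix_add_smul_one_mulVec_indicator_apply, hv,
          G.filter_adj_eq_empty_of_isIndepSet hS hv]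
    _ = lam * #S := by rw [sum_const, nsmul_eq_mul, mul_comm]

theorem mulVec_indicator_eq_iff_of_isIndepSet (hS : G.IsIndepSet S) :
    (G.adjMatrix ℝ + lam • 1) *ᵥ (S : Set V).indicator 1 = lam • (fun _ => 1) ↔
      ∀ v ∉ S, (#{u ∈ S | G.Adj v u} : ℝ) = lam := by
  simp only [funext_iff, adjMatrix_add_smul_one_mulVec_indicator_apply, Pi.smul_apply,
    smul_eq_mul, mul_one]
  refine ⟨fun h v hv => by simpa [hv] using h v, fun h v => ?_⟩
  by_cases hv : v ∈ S
  · simp [hv, G.filter_adj_eq_empty_of_isIndepSet hS hv]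
  · simp [hv, h v hv]

theorem two_mul_dotProduct_indicator_sub_of_isIndepSet (hS : G.IsIndepSet S) :
    2 * ((lam • fun _ => 1) ⬝ᵥ (S : Set V).indicator 1) -
        (S : Set V).indicator 1 ⬝ᵥ (G.adjMatrix ℝ + lam • 1) *ᵥ (S : Set V).indicator 1 =
      lam * #S := by
  rw [indicator_dotProduct_mulVec_indicator_of_isIndepSet G lam hS, smul_dotProduct,
    one_dotProduct_indicator, smul_eq_mul]
  ring

variable {G lam}

theorem card_le_of_isIndepSet (hpd : (G.adjMatrix ℝ + lam • 1).PosDef) (hlam : 0 < lam)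
    (hS : G.IsIndepSet S) :
    (#S : ℝ) ≤ lam * ((fun _ => 1) ⬝ᵥ (G.adjMatrix ℝ + lam • 1)⁻¹ *ᵥ fun _ => 1) := by
  have h := hpd.two_mul_dotProduct_sub_le (lam • fun _ => 1) ((S : Set V).indicator 1)
  rw [two_mul_dotProduct_indicator_sub_of_isIndepSet G lam hS, mulVec_smul, smul_dotProduct,
    dotProduct_smul, smul_eq_mul, smul_eq_mul] at h
  exact le_of_mul_le_mul_left h hlam

theorem card_eq_iff_of_isIndepSet (hpd : (G.adjMatrix ℝ + lam • 1).PosDef) (hlam : 0 < lam)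
    (hS : G.IsIndepSet S) :
    (#S : ℝ) = lam * ((fun _ => 1) ⬝ᵥ (G.adjMatrix ℝ + lam • 1)⁻¹ *ᵥ fun _ => 1) ↔
      ∀ v ∉ S, (#{u ∈ S | G.Adj v u} : ℝ) = lam := by
  rw [← mulVec_indicator_eq_iff_of_isIndepSet G lam hS,
    ← hpd.two_mul_dotProduct_sub_eq_iff, two_mul_dotProduct_indicator_sub_of_isIndepSet G lam hS,
    mulVec_smul, smul_dotProduct, dotProduct_smul, smul_eq_mul, smul_eq_mul,
    mul_right_inj' hlam.ne']

end SimpleGraph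

/-- Corollary 4.5: if A + λI is positive definite for some λ > 0, then
α(G) ≤ λ·eᵀ(A+λI)⁻¹e, with equality iff there is an independent set C such that
every vertex not in C has exactly λ neighbours in C. -/
theorem stmt9 (n : ℕ) (G : SimpleGraph (Fin n)) (lam : ℝ) (hlam : 0 < lam)
    (hpd : (G.adjMatrix ℝ + lam • (1 : Matrix (Fin n) (Fin n) ℝ)).PosDef) :
    (indepNum G : ℝ) ≤
        lam * ((fun _ => (1 : ℝ)) ⬝ᵥ
          (G.adjMatrix ℝ + lam • (1 : Matrix (Fin n) (Fin n) ℝ))⁻¹.mulVec fun _ => 1) ∧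
      ((indepNum G : ℝ) =
          lam * ((fun _ => (1 : ℝ)) ⬝ᵥ
            (G.adjMatrix ℝ + lam • (1 : Matrix (Fin n) (Fin n) ℝ))⁻¹.mulVec fun _ => 1) ↔
        ∃ C : Finset (Fin n), (∀ u ∈ C, ∀ v ∈ C, u ≠ v → ¬ G.Adj u v) ∧
          ∀ v ∉ C, ((C.filter fun u => G.Adj v u).card : ℝ) = lam) := by
  obtain ⟨S, hS, hScard⟩ := G.exists_isNIndepSet_indepNum
  rw [indepNum_eq_indepNum, ← hScard]
  refine ⟨G.card_le_of_isIndepSet hpd hlam hS, fun heq => ⟨S, hS, ?_⟩, ?_⟩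
  · exact (G.card_eq_iff_of_isIndepSet hpd hlam hS).1 heq
  · rintro ⟨C, hC, hCdeg⟩
    have hCeq := (G.card_eq_iff_of_isIndepSet hpd hlam hC).2 hCdeg
    have hCS : (#C : ℝ) ≤ #S := by
      rw [hScard]
      exact_mod_cast SimpleGraph.IsIndepSet.card_le_indepNum (G := G) hC
    linarith [G.card_le_of_isIndepSet hpd hlam hS]
end

section
/- Let G be a k-regular graph (k ≠ 0) on n vertices with minimum adjacency eigenvalue τ. Then α(G) ≤ n·|τ|/(k − τ), with equality if and only if there exists an independent set C such that every vertex not in C is adjacent to exactly |τ| vertices of C. -/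
open scoped Classical
open Matrix Finset

lemma aux_rayleigh {m : ℕ} (A : Matrix (Fin m) (Fin m) ℝ) (hA : A.IsHermitian) (τ : ℝ)
    (hτ : ∀ i, τ ≤ hA.eigenvalues i) (x : Fin m → ℝ) :
    τ * (x ⬝ᵥ x) ≤ x ⬝ᵥ (A *ᵥ x) ∧
      (x ⬝ᵥ (A *ᵥ x) = τ * (x ⬝ᵥ x) → A *ᵥ x = τ • x) := by
  set V : Matrix (Fin m) (Fin m) ℝ :=
    (Matrix.IsHermitian.eigenvectorUnitary hA : Matrix (Fin m) (Fin m) ℝ) with hVdef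
  have hV1 : V * star V = 1 :=
    Matrix.mem_unitaryGroup_iff.mp (Matrix.IsHermitian.eigenvectorUnitary hA).2
  have hst : star V = Vᵀ := by
    rw [Matrix.star_eq_conjTranspose]; ext i j; simp [Matrix.conjTranspose_apply]
  set y : Fin m → ℝ := Vᵀ *ᵥ x with hydef
  have hVy : V *ᵥ y = x := by
    rw [hydef, Matrix.mulVec_mulVec, ← hst, hV1, Matrix.one_mulVec]
  have hDdiag : (Matrix.diagonal (RCLike.ofReal ∘ hA.eigenvalues) : Matrix (Fin m) (Fin m) ℝ)
      = Matrix.diagonal hA.eigenvalues := by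
    congr 1
  have hspec : A = V * Matrix.diagonal hA.eigenvalues * Vᵀ := by
    rw [← hst, ← hDdiag]; exact hA.spectral_theorem
  have hAx : A *ᵥ x = V *ᵥ (Matrix.diagonal hA.eigenvalues *ᵥ y) := by
    conv_lhs => rw [hspec]
    rw [← Matrix.mulVec_mulVec, ← Matrix.mulVec_mulVec, ← hydef]
  have hdot : ∀ z : Fin m → ℝ, x ⬝ᵥ (V *ᵥ z) = y ⬝ᵥ z := by
    intro z
    rw [Matrix.dotProduct_mulVec]
    congr 1
    rw [hydef, Matrix.mulVec_transpose]
  have hxx : x ⬝ᵥ x = y ⬝ᵥ y := by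
    calc x ⬝ᵥ x = x ⬝ᵥ (V *ᵥ y) := by rw [hVy]
    _ = y ⬝ᵥ y := hdot y
  have hq : x ⬝ᵥ (A *ᵥ x) = ∑ i, hA.eigenvalues i * (y i * y i) := by
    rw [hAx, hdot]
    apply Finset.sum_congr rfl
    intro i _
    rw [Matrix.mulVec_diagonal]
    ring
  have hyy : x ⬝ᵥ x = ∑ i, y i * y i := by rw [hxx]; rfl
  have hterm : ∀ i ∈ Finset.univ, 0 ≤ (hA.eigenvalues i - τ) * (y i * y i) :=
    fun i _ => mul_nonneg (by linarith [hτ i]) (mul_self_nonneg _)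
  have hdiff : x ⬝ᵥ (A *ᵥ x) - τ * (x ⬝ᵥ x) = ∑ i, (hA.eigenvalues i - τ) * (y i * y i) := by
    rw [hq, hyy, Finset.mul_sum, ← Finset.sum_sub_distrib]
    exact Finset.sum_congr rfl fun i _ => by ring
  have hnn : 0 ≤ ∑ i, (hA.eigenvalues i - τ) * (y i * y i) := Finset.sum_nonneg hterm
  constructor
  · linarith [hdiff, hnn]
  · intro he
    have h0 : ∑ i, (hA.eigenvalues i - τ) * (y i * y i) = 0 := by rw [← hdiff, he]; ring
    have hz := (Finset.sum_eq_zero_iff_of_nonneg hterm).mp h0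
    have hDy : Matrix.diagonal hA.eigenvalues *ᵥ y = τ • y := by
      funext i
      rw [Matrix.mulVec_diagonal]
      rcases mul_eq_zero.mp (hz i (Finset.mem_univ i)) with h | h
      · have h' : hA.eigenvalues i = τ := by linarith
        simp [h', Pi.smul_apply, smul_eq_mul]
      · have h' : y i = 0 := mul_self_eq_zero.mp h
        simp [h']
    rw [hAx, hDy, Matrix.mulVec_smul, hVy]

/-- Hoffman's ratio bound (Theorem 1.1 / Corollary 6.1): for a k-regular graph (k ≠ 0)
on n vertices with minimum adjacency eigenvalue τ, α(G) ≤ n|τ|/(k−τ), with equality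
iff there is an independent set C such that every vertex outside C has exactly |τ|
neighbours in C. -/
theorem stmt10 (n k : ℕ) (G : SimpleGraph (Fin n))
    (hreg : G.IsRegularOfDegree k) (hk : k ≠ 0) (τ : ℝ)
    (hτev : ∃ v : Fin n → ℝ, v ≠ 0 ∧ (G.adjMatrix ℝ).mulVec v = τ • v)
    (hτmin : ∀ (μ : ℝ) (v : Fin n → ℝ), v ≠ 0 → (G.adjMatrix ℝ).mulVec v = μ • v → τ ≤ μ) :
    (indepNum G : ℝ) ≤ n * |τ| / (k - τ) ∧
      ((indepNum G : ℝ) = n * |τ| / (k - τ) ↔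
        ∃ C : Finset (Fin n), (∀ u ∈ C, ∀ v ∈ C, u ≠ v → ¬ G.Adj u v) ∧
          ∀ v ∉ C, ((C.filter fun u => G.Adj v u).card : ℝ) = |τ|) := by
  classical
  -- n is positive
  have hn : 0 < n := by
    by_contra h
    push_neg at h
    interval_cases n
    obtain ⟨v, hv, -⟩ := hτev
    exact hv (funext fun i => absurd i.2 (Nat.not_lt_zero _))
  have hnpos : (0:ℝ) < n := by exact_mod_cast hn
  have hn0 : (n:ℝ) ≠ 0 := ne_of_gt hnpos
  set A := G.adjMatrix ℝ with hAdef
  have hA : A.IsHermitian := by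
    show Aᴴ = A
    ext i j
    simp [hAdef, Matrix.conjTranspose_apply, G.adj_comm i j]
  have hbne : ∀ i, (⇑(hA.eigenvectorBasis i) : Fin n → ℝ) ≠ 0 := by
    intro i h
    exact hA.eigenvectorBasis.orthonormal.ne_zero i (by ext j; exact congrFun h j)
  have hτle : ∀ i, τ ≤ hA.eigenvalues i :=
    fun i => hτmin _ _ (hbne i) (hA.mulVec_eigenvectorBasis i)
  have key := fun x => aux_rayleigh A hA τ hτle x
  -- τ ≤ -1
  have hsplit : ∀ (a b : Fin n), a ≠ b → ∀ (s : Finset (Fin n)) (p q : ℝ),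
      (∑ w ∈ s, (if w = a then p else if w = b then q else 0))
        = (if a ∈ s then p else 0) + (if b ∈ s then q else 0) := by
    intro a b hne s p q
    have hpt : ∀ w, (if w = a then p else if w = b then q else 0)
        = (if w = a then p else 0) + (if w = b then q else 0) := by
      intro w
      by_cases h1 : w = a <;> by_cases h2 : w = b
      · exact absurd (h1 ▸ h2) hne
      all_goals simp [h1, h2, hne, Ne.symm hne]
    simp_rw [hpt]
    rw [Finset.sum_add_distrib, Finset.sum_ite_eq', Finset.sum_ite_eq']
  have hτ1 : τ ≤ -1 := by
    obtain ⟨b, hb⟩ : ∃ b, G.Adj ⟨0, hn⟩ b := by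
      have : 0 < (G.neighborFinset ⟨0, hn⟩).card := by
        rw [G.card_neighborFinset_eq_degree, hreg ⟨0, hn⟩]
        exact Nat.pos_of_ne_zero hk
      obtain ⟨b, hb⟩ := Finset.card_pos.mp this
      exact ⟨b, (G.mem_neighborFinset _ _).mp hb⟩
    set a : Fin n := ⟨0, hn⟩
    have hne : a ≠ b := G.ne_of_adj hb
    set x : Fin n → ℝ := fun w => if w = a then 1 else if w = b then -1 else 0 with hxdef
    have hAxa : (A *ᵥ x) a = -1 := by
      rw [hAdef, SimpleGraph.adjMatrix_mulVec_apply, hxdef, hsplit a b hne]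
      simp [SimpleGraph.mem_neighborFinset, G.irrefl, hb]
    have hAxb : (A *ᵥ x) b = 1 := by
      rw [hAdef, SimpleGraph.adjMatrix_mulVec_apply, hxdef, hsplit a b hne]
      simp [SimpleGraph.mem_neighborFinset, G.irrefl, hb.symm, Ne.symm hne]
    have hxAx : x ⬝ᵥ (A *ᵥ x) = -2 := by
      have hpt : ∀ w, x w * (A *ᵥ x) w
          = (if w = a then (A *ᵥ x) a else if w = b then -(A *ᵥ x) b else 0) := by
        intro w
        by_cases h1 : w = a <;> by_cases h2 : w = b
        · exact absurd (h1 ▸ h2) hne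
        all_goals simp [hxdef, h1, h2, hne, Ne.symm hne]
      show (∑ w, x w * (A *ᵥ x) w) = -2
      simp_rw [hpt]
      rw [hsplit a b hne]
      norm_num [hAxa, hAxb]
    have hxx : x ⬝ᵥ x = 2 := by
      have hpt : ∀ w, x w * x w = (if w = a then (1:ℝ) else if w = b then 1 else 0) := by
        intro w
        by_cases h1 : w = a <;> by_cases h2 : w = b
        · exact absurd (h1 ▸ h2) hne
        all_goals simp [hxdef, h1, h2, hne, Ne.symm hne]
      show (∑ w, x w * x w) = 2
      simp_rw [hpt]
      rw [hsplit a b hne]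
      norm_num
    have := (key x).1
    rw [hxx, hxAx] at this
    linarith
  have hτneg : τ < 0 := by linarith
  have habs : |τ| = -τ := abs_of_neg hτneg
  have hkτ : (0:ℝ) < (k:ℝ) - τ := by
    have : (0:ℝ) ≤ k := Nat.cast_nonneg k
    linarith
  -- counting lemmas
  have hfilter_eq : ∀ (C : Finset (Fin n)) (v : Fin n),
      ∑ u ∈ G.neighborFinset v, (if u ∈ C then (1:ℝ) else 0)
        = ((C.filter fun u => G.Adj v u).card : ℝ) := by
    intro C v
    rw [Finset.sum_ite_mem, Finset.sum_const, nsmul_eq_mul, mul_one]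
    congr 2
    ext u
    simp [SimpleGraph.mem_neighborFinset, and_comm]
  have hdzero : ∀ C : Finset (Fin n), (∀ u ∈ C, ∀ v ∈ C, u ≠ v → ¬ G.Adj u v) →
      ∀ v ∈ C, ((C.filter fun u => G.Adj v u).card : ℝ) = 0 := by
    intro C hind v hv
    have he : (C.filter fun u => G.Adj v u) = ∅ := by
      rw [Finset.filter_eq_empty_iff]
      intro u hu hadj
      rcases eq_or_ne v u with rfl | hne'
      · exact G.irrefl hadj
      · exact hind v hv u hu hne' hadj
    rw [he]
    simp
  have hdsum : ∀ C : Finset (Fin n),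
      ∑ v, ((C.filter fun u => G.Adj v u).card : ℝ) = (k:ℝ) * C.card := by
    intro C
    have h1 : ∀ v : Fin n, ((C.filter fun u => G.Adj v u).card : ℝ)
        = ∑ u ∈ C, (if G.Adj v u then (1:ℝ) else 0) := by
      intro v
      rw [Finset.sum_boole]
    simp_rw [h1]
    rw [Finset.sum_comm]
    have h2 : ∀ u ∈ C, (∑ v : Fin n, if G.Adj v u then (1:ℝ) else 0) = (k:ℝ) := by
      intro u _
      rw [Finset.sum_boole]
      have h3 : (Finset.univ.filter fun v => G.Adj v u) = G.neighborFinset u := by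
        ext w
        simp [SimpleGraph.mem_neighborFinset, G.adj_comm]
      rw [h3, G.card_neighborFinset_eq_degree, hreg u]
    rw [Finset.sum_congr rfl h2, Finset.sum_const, nsmul_eq_mul, mul_comm]
  -- the main computation for an independent set C
  have main : ∀ C : Finset (Fin n), (∀ u ∈ C, ∀ v ∈ C, u ≠ v → ¬ G.Adj u v) →
      ((C.card : ℝ) * ((k:ℝ) - τ) ≤ (-τ) * n ∧
        ((C.card : ℝ) * ((k:ℝ) - τ) = (-τ) * n →
          ∀ v ∉ C, ((C.filter fun u => G.Adj v u).card : ℝ) = -τ)) := by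
    intro C hind
    set c : ℝ := (C.card : ℝ) with hcdef
    have hc0 : 0 ≤ c := Nat.cast_nonneg _
    set d : Fin n → ℝ := fun v => ((C.filter fun u => G.Adj v u).card : ℝ) with hddef
    set x : Fin n → ℝ := fun v => (if v ∈ C then (1:ℝ) else 0) - c / n with hxdef
    have hd : ∀ v, (A *ᵥ x) v = d v - (k:ℝ) * (c / n) := by
      intro v
      rw [hAdef, SimpleGraph.adjMatrix_mulVec_apply]
      simp only [hxdef]
      rw [Finset.sum_sub_distrib, hfilter_eq C v, Finset.sum_const,
        G.card_neighborFinset_eq_degree, hreg v, nsmul_eq_mul]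
    have hsum_e : ∑ v, (if v ∈ C then (1:ℝ) else 0) = c := by
      rw [Finset.sum_ite_mem, Finset.univ_inter, Finset.sum_const, nsmul_eq_mul, mul_one]
    have hS2 : ∑ v ∈ C, d v = 0 :=
      Finset.sum_eq_zero fun v hv => hdzero C hind v hv
    have hxx : (x ⬝ᵥ x) * n = c * n - c ^ 2 := by
      have hpt : ∀ v, x v * x v
          = (1 - 2 * (c / n)) * (if v ∈ C then (1:ℝ) else 0) + (c / n) ^ 2 := by
        intro v
        simp only [hxdef]
        by_cases h : v ∈ C <;> simp [h] <;> ring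
      show (∑ v, x v * x v) * (n:ℝ) = c * n - c ^ 2
      simp_rw [hpt]
      rw [Finset.sum_add_distrib, ← Finset.mul_sum, hsum_e, Finset.sum_const,
        Finset.card_univ, Fintype.card_fin, nsmul_eq_mul]
      field_simp
      ring
    have hxAx : (x ⬝ᵥ (A *ᵥ x)) * n = -((k:ℝ) * c ^ 2) := by
      have hpt : ∀ v, x v * (A *ᵥ x) v
          = (if v ∈ C then d v else 0) - ((k:ℝ) * (c / n)) * (if v ∈ C then (1:ℝ) else 0)
            - (c / n) * d v + (k:ℝ) * (c / n) ^ 2 := by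
        intro v
        rw [hd v]
        by_cases h : v ∈ C <;> simp only [hxdef, h, if_true, if_false] <;> ring
      show (∑ v, x v * (A *ᵥ x) v) * (n:ℝ) = -((k:ℝ) * c ^ 2)
      simp_rw [hpt]
      rw [Finset.sum_add_distrib, Finset.sum_sub_distrib, Finset.sum_sub_distrib,
        Finset.sum_ite_mem, Finset.univ_inter, hS2, ← Finset.mul_sum, hsum_e,
        ← Finset.mul_sum, hdsum C, Finset.sum_const, Finset.card_univ,
        Fintype.card_fin, nsmul_eq_mul]
      field_simp
      ring
    have hineq : τ * (c * n - c ^ 2) ≤ -((k:ℝ) * c ^ 2) := by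
      have h := mul_le_mul_of_nonneg_right (key x).1 hnpos.le
      rw [mul_assoc, hxx, hxAx] at h
      exact h
    constructor
    · rcases eq_or_lt_of_le hc0 with h0 | h0
      · rw [← h0]
        nlinarith
      · nlinarith
    · intro heq v hv
      have hc : 0 < c := by nlinarith
      have h3 : (x ⬝ᵥ (A *ᵥ x)) * n = (τ * (x ⬝ᵥ x)) * n := by
        rw [hxAx, mul_assoc, hxx]
        linear_combination (-c) * heq
      have heq2 : x ⬝ᵥ (A *ᵥ x) = τ * (x ⬝ᵥ x) := mul_right_cancel₀ hn0 h3
      have heig := (key x).2 heq2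
      have h4 := congrFun heig v
      rw [hd v] at h4
      have h5 : x v = -(c / n) := by
        simp only [hxdef, hv, if_false]
        ring
      have h6 : (τ • x) v = τ * x v := rfl
      rw [h6, h5] at h4
      -- h4 : d v - k * (c/n) = τ * (-(c/n))
      have h7 : d v = -τ := by
        have h8 : d v = (k:ℝ) * (c / n) - τ * (c / n) := by linarith [h4]
        rw [h8]
        calc (k:ℝ) * (c / n) - τ * (c / n) = (c * ((k:ℝ) - τ)) / n := by ring
        _ = ((-τ) * n) / n := by rw [heq]
        _ = -τ := by field_simp
      exact h7
  -- independence number facts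
  set Sset : Set ℕ :=
    {m | ∃ S : Finset (Fin n), (∀ u ∈ S, ∀ v ∈ S, u ≠ v → ¬ G.Adj u v) ∧ S.card = m}
    with hSdef
  have hbdd : BddAbove Sset := by
    refine ⟨n, fun m hm => ?_⟩
    obtain ⟨S, -, hS⟩ := hm
    rw [← hS]
    calc S.card ≤ (Finset.univ : Finset (Fin n)).card := Finset.card_le_univ S
    _ = n := by simp
  have hSne : Sset.Nonempty := ⟨0, ∅, by simp, rfl⟩
  have hindep_eq : indepNum G = sSup Sset := rfl
  obtain ⟨C0, hC0ind, hC0card⟩ : indepNum G ∈ Sset := by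
    rw [hindep_eq]
    exact Nat.sSup_mem hSne hbdd
  have hub : (indepNum G : ℝ) * ((k:ℝ) - τ) ≤ (-τ) * n := by
    have := (main C0 hC0ind).1
    rwa [hC0card] at this
  have hUB : (indepNum G : ℝ) ≤ n * |τ| / ((k:ℝ) - τ) := by
    rw [habs, le_div_iff₀ hkτ]
    linarith
  refine ⟨hUB, ?_, ?_⟩
  · -- equality implies existence of C
    intro heqR
    have heq : (indepNum G : ℝ) * ((k:ℝ) - τ) = (-τ) * n := by
      rw [heqR, habs, div_mul_cancel₀ _ (ne_of_gt hkτ)]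
      ring
    refine ⟨C0, hC0ind, fun v hv => ?_⟩
    rw [habs]
    have := (main C0 hC0ind).2 (by rwa [hC0card]) v hv
    exact this
  · -- existence of C implies equality
    rintro ⟨C, hCind, hCdeg⟩
    have hCn : C.card ≤ n := by
      calc C.card ≤ (Finset.univ : Finset (Fin n)).card := Finset.card_le_univ C
      _ = n := by simp
    have hcompl : ((Cᶜ : Finset (Fin n)).card : ℝ) = n - (C.card : ℝ) := by
      rw [Finset.card_compl]
      rw [Nat.cast_sub (by simpa using hCn)]
      simp
    have hsum1 : ∑ v, ((C.filter fun u => G.Adj v u).card : ℝ) = (k:ℝ) * C.card := hdsum C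
    have hsum2 : ∑ v, ((C.filter fun u => G.Adj v u).card : ℝ)
        = ((n:ℝ) - C.card) * (-τ) := by
      rw [← Finset.sum_add_sum_compl C]
      rw [Finset.sum_eq_zero fun v hv => hdzero C hCind v hv, zero_add]
      have : ∀ v ∈ Cᶜ, ((C.filter fun u => G.Adj v u).card : ℝ) = -τ := by
        intro v hv
        rw [← habs]
        exact hCdeg v (Finset.mem_compl.mp hv)
      rw [Finset.sum_congr rfl this, Finset.sum_const, nsmul_eq_mul, hcompl]
    have hceq : (C.card : ℝ) * ((k:ℝ) - τ) = (-τ) * n := by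
      have := hsum1.symm.trans hsum2
      nlinarith [this]
    have hle : (C.card : ℝ) ≤ (indepNum G : ℝ) := by
      have : C.card ≤ indepNum G := by
        rw [hindep_eq]
        exact le_csSup hbdd ⟨C, hCind, rfl⟩
      exact_mod_cast this
    rw [habs, eq_div_iff (ne_of_gt hkτ)]
    have h9 : (indepNum G : ℝ) * ((k:ℝ) - τ) ≥ (C.card : ℝ) * ((k:ℝ) - τ) :=
      mul_le_mul_of_nonneg_right hle hkτ.le
    linarith
end

section
/- Let G be an n-vertex graph and M a positive semidefinite matrix indexed by V(G) such that (M)_{ij} ≤ 0 for nonadjacent distinct i, j, M has constant row sum r > 0, and every diagonal entry of M equals t. Then α(G) ≤ nt/r, with equality if and only if G has an independent set C with M[C] diagonal and Σ_{u∈C} (M)_{vu} = t for every v ∉ C. -/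
/-!
For any vector `x`, put `z = n • x - (∑ i, x i) • 1`. Because `M` is symmetric with `M *ᵥ 1 = r • 1`,
`z ⬝ᵥ M *ᵥ z = n * (n * (x ⬝ᵥ M *ᵥ x) - r * (∑ i, x i) ^ 2)`, so positive semidefiniteness gives
`r * (∑ i, x i) ^ 2 ≤ n * (x ⬝ᵥ M *ᵥ x)`. Applied to the indicator vector of an independent set `C`,
whose off-diagonal entries in `M` are nonpositive, this reads `r * |C| ^ 2 ≤ n * |C| * t`.
At equality `z ⬝ᵥ M *ᵥ z = 0`, hence `M *ᵥ z = 0`: every row of `M` sums to `t` over `C`, which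
forces `M[C]` to be diagonal. Conversely, if every row sums to `t` over `C`, summing over all rows
gives `r * |C| = n * t`.
-/
open scoped Classical
open Matrix Finset

theorem Finset.sum_indicator_one {ι : Type*} [Fintype ι] (C : Finset ι) :
    ∑ i, (C : Set ι).indicator (1 : ι → ℝ) i = C.card := by
  simp [Set.indicator_apply]

namespace Matrix

section OrderedGroup

variable {ι R : Type*} [AddCommGroup R] [PartialOrder R] [IsOrderedAddMonoid R] {M : Matrix ι ι R}

theorem sum_sum_le_sum_diag (C : Finset ι) (hC : ∀ i ∈ C, ∀ j ∈ C, i ≠ j → M i j ≤ 0) :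
    ∑ i ∈ C, ∑ j ∈ C, M i j ≤ ∑ i ∈ C, M i i := by
  refine Finset.sum_le_sum fun i hi => ?_
  rw [← Finset.add_sum_erase C _ hi]
  exact add_le_of_nonpos_right <| Finset.sum_nonpos fun j hj =>
    hC i hi j (Finset.mem_of_mem_erase hj) (Finset.ne_of_mem_erase hj).symm

theorem eq_zero_of_sum_eq_diag {C : Finset ι} (hC : ∀ i ∈ C, ∀ j ∈ C, i ≠ j → M i j ≤ 0)
    (hsum : ∀ i ∈ C, ∑ j ∈ C, M i j = M i i) : ∀ i ∈ C, ∀ j ∈ C, i ≠ j → M i j = 0 := by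
  intro i hi j hj hij
  have hoff : ∑ k ∈ C.erase i, M i k = 0 := by
    have := hsum i hi
    rwa [← Finset.add_sum_erase C _ hi, add_eq_left] at this
  exact (Finset.sum_eq_zero_iff_of_nonpos fun k hk =>
    hC i hi k (Finset.mem_of_mem_erase hk) (Finset.ne_of_mem_erase hk).symm).1 hoff j
    (Finset.mem_erase.2 ⟨hij.symm, hj⟩)

end OrderedGroup

variable {ι : Type*} {M : Matrix ι ι ℝ} {r t : ℝ}

theorem sum_sum_le_card_mul (hdiag : ∀ i, M i i = t) {C : Finset ι}
    (hC : ∀ i ∈ C, ∀ j ∈ C, i ≠ j → M i j ≤ 0) : ∑ i ∈ C, ∑ j ∈ C, M i j ≤ C.card * t := by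
  simpa [hdiag] using sum_sum_le_sum_diag C hC

variable [Fintype ι]

theorem IsHermitian.one_dotProduct_mulVec (hM : M.IsHermitian) (hrow : M *ᵥ 1 = r • 1)
    (x : ι → ℝ) : 1 ⬝ᵥ M *ᵥ x = r * ∑ i, x i := by
  have hMt : Mᵀ = M := by rw [← conjTranspose_eq_transpose_of_trivial, hM.eq]
  rw [dotProduct_mulVec, ← mulVec_transpose, hMt, hrow, smul_dotProduct, one_dotProduct,
    smul_eq_mul]

theorem mulVec_centered (hrow : M *ᵥ 1 = r • 1) (x : ι → ℝ) :
    M *ᵥ ((Fintype.card ι : ℝ) • x - (∑ i, x i) • 1) =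
      (Fintype.card ι : ℝ) • M *ᵥ x - (r * ∑ i, x i) • 1 := by
  simp only [mulVec_sub, mulVec_smul, hrow, smul_smul, mul_comm r]

theorem IsHermitian.centered_dotProduct_mulVec_centered (hM : M.IsHermitian)
    (hrow : M *ᵥ 1 = r • 1) (x : ι → ℝ) :
    ((Fintype.card ι : ℝ) • x - (∑ i, x i) • 1) ⬝ᵥ
        M *ᵥ ((Fintype.card ι : ℝ) • x - (∑ i, x i) • 1) =
      Fintype.card ι * (Fintype.card ι * (x ⬝ᵥ M *ᵥ x) - r * (∑ i, x i) ^ 2) := by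
  rw [mulVec_centered hrow]
  simp only [sub_dotProduct, dotProduct_sub, smul_dotProduct, dotProduct_smul, smul_eq_mul,
    hM.one_dotProduct_mulVec hrow, dotProduct_one, Pi.sub_apply, Pi.smul_apply, Pi.one_apply,
    Finset.sum_sub_distrib, ← Finset.mul_sum, Finset.sum_const, Finset.card_univ, nsmul_eq_mul,
    mul_one]
  ring

theorem PosSemidef.mul_sum_sq_le (hM : M.PosSemidef) (hrow : M *ᵥ 1 = r • 1) (x : ι → ℝ) :
    r * (∑ i, x i) ^ 2 ≤ Fintype.card ι * (x ⬝ᵥ M *ᵥ x) := by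
  rcases isEmpty_or_nonempty ι with hι | hι
  · simp
  have h := hM.dotProduct_mulVec_nonneg ((Fintype.card ι : ℝ) • x - (∑ i, x i) • 1)
  rw [star_trivial, hM.isHermitian.centered_dotProduct_mulVec_centered hrow] at h
  have hn : (0 : ℝ) < Fintype.card ι := by exact_mod_cast Fintype.card_pos
  nlinarith

theorem PosSemidef.card_mul_mulVec_apply_eq_of_eq (hM : M.PosSemidef) (hrow : M *ᵥ 1 = r • 1)
    {x : ι → ℝ} (hx : r * (∑ i, x i) ^ 2 = Fintype.card ι * (x ⬝ᵥ M *ᵥ x)) (i : ι) :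
    Fintype.card ι * (M *ᵥ x) i = r * ∑ j, x j := by
  have h := (hM.dotProduct_mulVec_zero_iff ((Fintype.card ι : ℝ) • x - (∑ i, x i) • 1)).1 (by
    rw [star_trivial, hM.isHermitian.centered_dotProduct_mulVec_centered hrow, ← hx]; ring)
  have hi := congrFun h i
  rw [mulVec_centered hrow] at hi
  simpa [sub_eq_zero] using hi

theorem mulVec_indicator_one (C : Finset ι) (i : ι) :
    (M *ᵥ (C : Set ι).indicator 1) i = ∑ j ∈ C, M i j := by
  simp [mulVec, dotProduct, Set.indicator_apply, Finset.sum_ite_mem]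

theorem indicator_one_dotProduct_mulVec (C : Finset ι) :
    (C : Set ι).indicator 1 ⬝ᵥ M *ᵥ (C : Set ι).indicator 1 = ∑ i ∈ C, ∑ j ∈ C, M i j := by
  simp [dotProduct, mulVec_indicator_one, Set.indicator_apply, Finset.sum_ite_mem]

theorem PosSemidef.mul_card_sq_le (hM : M.PosSemidef) (hrow : M *ᵥ 1 = r • 1) (C : Finset ι) :
    r * C.card ^ 2 ≤ Fintype.card ι * ∑ i ∈ C, ∑ j ∈ C, M i j := by
  simpa [sum_indicator_one, indicator_one_dotProduct_mulVec] using
    hM.mul_sum_sq_le hrow ((C : Set ι).indicator 1)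

theorem PosSemidef.mul_card_le (hM : M.PosSemidef) (hrow : M *ᵥ 1 = r • 1)
    (hdiag : ∀ i, M i i = t) {C : Finset ι} (hC : ∀ i ∈ C, ∀ j ∈ C, i ≠ j → M i j ≤ 0) :
    r * C.card ≤ Fintype.card ι * t := by
  have htrace : 0 ≤ Fintype.card ι * t := by
    simpa [trace, hdiag] using hM.trace_nonneg
  have hS := sum_sum_le_card_mul hdiag hC
  have h := hM.mul_card_sq_le hrow C
  rcases (Nat.cast_nonneg (α := ℝ) C.card).eq_or_lt with hC0 | hCpos
  · rw [← hC0, mul_zero]; exact htrace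
  · nlinarith [mul_le_mul_of_nonneg_left hS (Nat.cast_nonneg (α := ℝ) (Fintype.card ι))]

theorem PosSemidef.sum_eq_of_mul_card_eq (hM : M.PosSemidef) (hrow : M *ᵥ 1 = r • 1)
    (hdiag : ∀ i, M i i = t) {C : Finset ι} (hC : ∀ i ∈ C, ∀ j ∈ C, i ≠ j → M i j ≤ 0)
    (heq : r * C.card = Fintype.card ι * t) (i : ι) : ∑ j ∈ C, M i j = t := by
  have hS := sum_sum_le_card_mul hdiag hC
  have hsq : r * (∑ i, (C : Set ι).indicator (1 : ι → ℝ) i) ^ 2 =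
      Fintype.card ι * ((C : Set ι).indicator 1 ⬝ᵥ M *ᵥ (C : Set ι).indicator 1) := by
    rw [sum_indicator_one, indicator_one_dotProduct_mulVec]
    refine le_antisymm (hM.mul_card_sq_le hrow C) ?_
    nlinarith [mul_le_mul_of_nonneg_left hS (Nat.cast_nonneg (α := ℝ) (Fintype.card ι))]
  have h := hM.card_mul_mulVec_apply_eq_of_eq hrow hsq i
  rw [mulVec_indicator_one, sum_indicator_one, heq] at h
  have hn : (Fintype.card ι : ℝ) ≠ 0 := by
    have : Nonempty ι := ⟨i⟩
    exact_mod_cast Fintype.card_ne_zero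
  exact mul_left_cancel₀ hn h

theorem IsHermitian.mul_card_eq_of_sum_eq (hM : M.IsHermitian) (hrow : M *ᵥ 1 = r • 1)
    {C : Finset ι} (hsum : ∀ i, ∑ j ∈ C, M i j = t) : r * C.card = Fintype.card ι * t := by
  have h := hM.one_dotProduct_mulVec hrow ((C : Set ι).indicator 1)
  simpa [one_dotProduct, mulVec_indicator_one, hsum, sum_indicator_one] using h.symm

end Matrix

/-- Corollary 6.5 (Godsil–Newman): if M is PSD, M_{ij} ≤ 0 for nonadjacent distinct i,j,
M has constant row sum r > 0 and constant diagonal t, then α(G) ≤ nt/r, with equality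
iff there is an independent set C with M[C] diagonal and Σ_{u∈C} M_{vu} = t for all
v ∉ C. -/
theorem stmt14 (n : ℕ) (G : SimpleGraph (Fin n)) (M : Matrix (Fin n) (Fin n) ℝ)
    (hM : M.PosSemidef)
    (hnonadj : ∀ i j : Fin n, i ≠ j → ¬ G.Adj i j → M i j ≤ 0)
    (r : ℝ) (hr : 0 < r) (hrow : M.mulVec (fun _ => (1 : ℝ)) = r • (fun _ => (1 : ℝ)))
    (t : ℝ) (hdiag : ∀ i, M i i = t) :
    (indepNum G : ℝ) ≤ n * t / r ∧
      ((indepNum G : ℝ) = n * t / r ↔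
        ∃ C : Finset (Fin n), (∀ u ∈ C, ∀ v ∈ C, u ≠ v → ¬ G.Adj u v) ∧
          (∀ u ∈ C, ∀ v ∈ C, u ≠ v → M u v = 0) ∧
          ∀ v ∉ C, ∑ u ∈ C, M v u = t) := by
  have hoff : ∀ C : Finset (Fin n), G.IsIndepSet C → ∀ u ∈ C, ∀ v ∈ C, u ≠ v → M u v ≤ 0 :=
    fun C hC u hu v hv huv => hnonadj u v huv (hC hu hv huv)
  have hbound : ∀ C : Finset (Fin n), G.IsIndepSet C → r * C.card ≤ n * t := fun C hC => by
    simpa using hM.mul_card_le hrow hdiag (hoff C hC)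
  obtain ⟨S, hS, hScard⟩ := G.exists_isNIndepSet_indepNum
  rw [indepNum_eq_indepNum]
  have hle : (G.indepNum : ℝ) ≤ n * t / r := by
    rw [le_div_iff₀ hr, ← hScard, mul_comm]
    exact hbound S hS
  refine ⟨hle, fun heq => ?_, ?_⟩
  · have hsum : ∀ i, ∑ j ∈ S, M i j = t := by
      refine hM.sum_eq_of_mul_card_eq hrow hdiag (hoff S hS) ?_
      rw [hScard, heq, Fintype.card_fin]
      field_simp
    exact ⟨S, hS, eq_zero_of_sum_eq_diag (hoff S hS) (fun i _ => by rw [hsum, hdiag]),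
      fun v _ => hsum v⟩
  · rintro ⟨C, hC, hCdiag, hCsum⟩
    have hsum : ∀ v, ∑ u ∈ C, M v u = t := fun v => by
      by_cases hv : v ∈ C
      · rw [Finset.sum_eq_single_of_mem v hv fun u hu huv => hCdiag v hv u hu huv.symm, hdiag]
      · exact hCsum v hv
    have hCeq : (C.card : ℝ) = n * t / r := by
      rw [eq_div_iff hr.ne', mul_comm]
      simpa using hM.isHermitian.mul_card_eq_of_sum_eq hrow hsum
    exact le_antisymm hle (hCeq ▸ by exact_mod_cast SimpleGraph.IsIndepSet.card_le_indepNum hC)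
end

section
/- Let G be a graph containing a spanning subgraph H that is a semiregular bipartite graph with parameters (n₁, n₂, r₁, r₂) where n₁r₁ = n₂r₂ > 0 and n₁ ≤ n₂, and suppose the part of size n₂ of H is also an independent set in G. Then α(G) = n₂. -/
/-!
An independent set `S` of `G` is independent in `H`, so the `H`-neighbours of `S ∩ V₁`
lie in `V₂ \ S`. Counting the `H`-edges between these two sets, each vertex of `S ∩ V₁`
sends out `r₁` of them and each vertex of `V₂ \ S` receives at most `r₂ ≤ r₁`, so
`|S ∩ V₁| ≤ |V₂ \ S|` and hence `|S| ≤ |V₂| = n₂`. The bound is attained by `V₂` itself.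
-/

open Finset

theorem indepNum_eq_of_isGreatest {V : Type*} [Fintype V] (G : SimpleGraph V) (n : ℕ)
    (hattained : ∃ S : Finset V, G.IsIndepSet (S : Set V) ∧ S.card = n)
    (hbound : ∀ S : Finset V, G.IsIndepSet (S : Set V) → S.card ≤ n) :
    indepNum G = n :=
  IsGreatest.csSup_eq ⟨hattained, by rintro _ ⟨S, hS, rfl⟩; exact hbound S hS⟩

namespace SimpleGraph

variable {V : Type*} [Fintype V] (H : SimpleGraph V) [DecidableRel H.Adj]

theorem card_le_card_of_neighbors_subset {A C : Finset V} {d : ℕ} (hd : 0 < d)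
    (hA : ∀ a ∈ A, d ≤ H.degree a) (hAC : ∀ a ∈ A, ∀ c, H.Adj a c → c ∈ C)
    (hC : ∀ c ∈ C, H.degree c ≤ d) :
    #A ≤ #C := by
  refine Nat.le_of_mul_le_mul_right
    (card_mul_le_card_mul H.Adj (fun a ha => ?above) fun c hc => ?below) hd
  case above =>
    have hnbr : H.neighborFinset a ⊆ C.bipartiteAbove H.Adj a := fun c hc => by
      rw [mem_neighborFinset] at hc
      exact (mem_bipartiteAbove H.Adj).2 ⟨hAC a ha c hc, hc⟩
    calc d ≤ H.degree a := hA a ha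
      _ = #(H.neighborFinset a) := (H.card_neighborFinset_eq_degree a).symm
      _ ≤ _ := card_le_card hnbr
  case below =>
    have hnbr : A.bipartiteBelow H.Adj c ⊆ H.neighborFinset c := fun a ha =>
      (H.mem_neighborFinset c a).2 ((mem_bipartiteBelow H.Adj).1 ha).2.symm
    calc _ ≤ #(H.neighborFinset c) := card_le_card hnbr
      _ = H.degree c := H.card_neighborFinset_eq_degree c
      _ ≤ d := hC c hc

theorem card_le_of_isIndepSet_s18 [DecidableEq V] {V₁ V₂ : Finset V}
    (hpart : V₁ ∪ V₂ = univ) (hdisj : Disjoint V₁ V₂)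
    (hbip : ∀ u v : V, H.Adj u v → (u ∈ V₁ ∧ v ∈ V₂) ∨ (u ∈ V₂ ∧ v ∈ V₁))
    {d : ℕ} (hd : 0 < d) (hV₁ : ∀ u ∈ V₁, d ≤ H.degree u) (hV₂ : ∀ v ∈ V₂, H.degree v ≤ d)
    {S : Finset V} (hS : H.IsIndepSet (S : Set V)) :
    #S ≤ #V₂ := by
  have hsplit : #S ≤ #(S ∩ V₁) + #(S ∩ V₂) := by
    rw [← card_union_of_disjoint (disjoint_of_subset_left inter_subset_right
      (disjoint_of_subset_right inter_subset_right hdisj)), ← inter_union_distrib_left, hpart,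
      inter_univ]
  have hnbr : ∀ a ∈ S ∩ V₁, ∀ c, H.Adj a c → c ∈ V₂ \ S := by
    intro a ha c hac
    obtain ⟨haS, haV₁⟩ := mem_inter.1 ha
    refine mem_sdiff.2 ⟨?_, fun hcS => hS haS hcS (H.ne_of_adj hac) hac⟩
    rcases hbip a c hac with ⟨-, hc⟩ | ⟨ha₂, -⟩
    · exact hc
    · exact absurd ha₂ (Finset.disjoint_left.1 hdisj haV₁)
  have hcount : #(S ∩ V₁) ≤ #(V₂ \ S) :=
    H.card_le_card_of_neighbors_subset hd (fun a ha => hV₁ a (mem_inter.1 ha).2) hnbr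
      fun c hc => hV₂ c (mem_sdiff.1 hc).1
  have hV₂split := card_sdiff_add_card_inter V₂ S
  rw [inter_comm V₂ S] at hV₂split
  omega

end SimpleGraph

theorem stmt18_general (V : Type*) [Fintype V] [DecidableEq V]
    (G H : SimpleGraph V) [DecidableRel H.Adj] (hsub : H ≤ G)
    (V₁ V₂ : Finset V) (hpart : V₁ ∪ V₂ = Finset.univ) (hdisj : Disjoint V₁ V₂)
    (hbip : ∀ u v : V, H.Adj u v → (u ∈ V₁ ∧ v ∈ V₂) ∨ (u ∈ V₂ ∧ v ∈ V₁))
    (n₁ n₂ r₁ r₂ : ℕ) (hn₂ : V₂.card = n₂)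
    (hr₁ : ∀ u ∈ V₁, H.degree u = r₁) (hr₂ : ∀ u ∈ V₂, H.degree u = r₂)
    (heq : n₁ * r₁ = n₂ * r₂) (hpos : 0 < n₁ * r₁) (hle : n₁ ≤ n₂)
    (hindep : ∀ u ∈ V₂, ∀ v ∈ V₂, u ≠ v → ¬ G.Adj u v) :
    indepNum G = n₂ := by
  have hr₁pos : 0 < r₁ := Nat.pos_of_mul_pos_left hpos
  have hr₂le : r₂ ≤ r₁ := by
    have hn₂pos : 0 < n₂ := Nat.pos_of_mul_pos_right (heq ▸ hpos)
    exact Nat.le_of_mul_le_mul_left (heq ▸ Nat.mul_le_mul_right r₁ hle) hn₂pos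
  refine indepNum_eq_of_isGreatest G n₂ ⟨V₂, hindep, hn₂⟩ fun S hS => hn₂ ▸ ?_
  exact H.card_le_of_isIndepSet_s18 hpart hdisj hbip hr₁pos (fun u hu => (hr₁ u hu).ge)
    (fun v hv => (hr₂ v hv).trans_le hr₂le) fun u hu v hv huv hadj => hS hu hv huv (hsub hadj)

/-- Example 4.3: if G has a spanning subgraph H which is semiregular bipartite with
parameters (n₁, n₂, r₁, r₂), n₁r₁ = n₂r₂ > 0, n₁ ≤ n₂, and the part of size n₂ is
independent in G, then α(G) = n₂. -/
theorem stmt18 (V : Type*) [Fintype V] [DecidableEq V]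
    (G H : SimpleGraph V) [DecidableRel H.Adj] (hsub : H ≤ G)
    (V₁ V₂ : Finset V) (hpart : V₁ ∪ V₂ = Finset.univ) (hdisj : Disjoint V₁ V₂)
    (hbip : ∀ u v : V, H.Adj u v → (u ∈ V₁ ∧ v ∈ V₂) ∨ (u ∈ V₂ ∧ v ∈ V₁))
    (n₁ n₂ r₁ r₂ : ℕ) (hn₁ : V₁.card = n₁) (hn₂ : V₂.card = n₂)
    (hr₁ : ∀ u ∈ V₁, H.degree u = r₁) (hr₂ : ∀ u ∈ V₂, H.degree u = r₂)
    (heq : n₁ * r₁ = n₂ * r₂) (hpos : 0 < n₁ * r₁) (hle : n₁ ≤ n₂)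
    (hindep : ∀ u ∈ V₂, ∀ v ∈ V₂, u ≠ v → ¬ G.Adj u v) :
    indepNum G = n₂ :=
  stmt18_general V G H hsub V₁ V₂ hpart hdisj hbip n₁ n₂ r₁ r₂ hn₂ hr₁ hr₂ heq hpos hle hindep
end

section
/- For the path P_{2k+1} on 2k+1 vertices with adjacency matrix A, the matrix A + 2I is positive definite and 2·eᵀ(A + 2I)⁻¹ e = k + 1; consequently α(P_{2k+1}) = k + 1. -/
/-!
Write `A` for the adjacency matrix of the path `P_n` and `B` for the unsigned vertex–edge incidence
matrix of the path on `n + 1` vertices, whose line graph is `P_n`. Then `A + 2I = BᵀB`, and `B` has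
trivial kernel, so `A + 2I` is positive definite. For odd `n` the indicator `v` of the even vertices
satisfies `Bv = e`, hence `(A + 2I) v = Bᵀe = 2e` and `2 eᵀ(A + 2I)⁻¹e = eᵀv = (n + 1) / 2`.
The even vertices are independent, and an independent set meets each pair `{2t, 2t + 1}` at most
once, so `α(P_n) = (n + 1) / 2`.
-/

open scoped Classical
open Matrix Finset

open SimpleGraph (pathGraph pathGraph_adj adjMatrix_apply)

-- Column `j` is the edge joining `j.castSucc` and `j.succ` in the path on `n + 1` vertices.
def pathIncMatrix (R : Type*) [AddMonoidWithOne R] (n : ℕ) : Matrix (Fin (n + 1)) (Fin n) R :=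
  of fun i j => (if i = j.castSucc then 1 else 0) + (if i = j.succ then 1 else 0)

def evenVertices (n : ℕ) : Finset (Fin n) :=
  {j | Even (j : ℕ)}

section PathIncMatrix

variable {R : Type*} {n : ℕ}

theorem pathIncMatrix_transpose_mul_self [NonAssocSemiring R] :
    (pathIncMatrix R n)ᵀ * pathIncMatrix R n = (pathGraph n).adjMatrix R + (2 : R) • 1 := by
  ext j l
  simp only [pathIncMatrix, mul_apply, transpose_apply, of_apply, mul_add, mul_ite, mul_one,
    mul_zero, sum_add_distrib, sum_ite_eq', mem_univ, if_true, Fin.castSucc_inj, Fin.succ_inj,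
    Matrix.add_apply, adjMatrix_apply, pathGraph_adj, Matrix.smul_apply, one_apply, smul_eq_mul]
  simp only [Fin.ext_iff, Fin.val_castSucc, Fin.val_succ]
  split_ifs <;> first | omega | simp [one_add_one_eq_two]

theorem pathIncMatrix_mulVec_zero [NonAssocSemiring R] (x : Fin (n + 1) → R) :
    (pathIncMatrix R (n + 1) *ᵥ x) 0 = x 0 := by
  simp [mulVec, dotProduct, pathIncMatrix, eq_comm]

theorem pathIncMatrix_mulVec_succ_castSucc [NonAssocSemiring R] (x : Fin (n + 1) → R)
    (i : Fin n) : (pathIncMatrix R (n + 1) *ᵥ x) i.succ.castSucc = x i.succ + x i.castSucc := by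
  have hsucc : ∀ l : Fin (n + 1), i.castSucc.succ = l.castSucc ↔ i.succ = l := fun l => by
    rw [Fin.succ_castSucc, Fin.castSucc_inj]
  simp [mulVec, dotProduct, pathIncMatrix, add_mul, sum_add_distrib, hsucc]

theorem pathIncMatrix_mulVec_injective [Ring R] : Function.Injective (pathIncMatrix R n).mulVec := by
  intro x y hxy
  cases n with
  | zero => exact Subsingleton.elim x y
  | succ n =>
    funext i
    induction i using Fin.induction with
    | zero => simpa only [pathIncMatrix_mulVec_zero] using congrFun hxy 0
    | succ i ih =>
      simpa only [pathIncMatrix_mulVec_succ_castSucc, ih, add_left_inj]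
        using congrFun hxy i.succ.castSucc

theorem pathIncMatrix_transpose_mulVec_one [NonAssocSemiring R] :
    (pathIncMatrix R n)ᵀ *ᵥ (fun _ => 1) = fun _ => 2 := by
  ext j
  simp [mulVec, dotProduct, pathIncMatrix, sum_add_distrib, one_add_one_eq_two]

theorem pathIncMatrix_mulVec_evenVertices [NonAssocSemiring R] (hn : Odd n) :
    pathIncMatrix R n *ᵥ (fun j => if j ∈ evenVertices n then 1 else 0) = fun _ => 1 := by
  ext i
  have hlt : 2 * (i / 2) < n := by obtain ⟨k, rfl⟩ := hn; omega
  -- Of `j = i` and `j + 1 = i` only the even one, `2 * (i / 2)`, contributes.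
  have hterm : ∀ j, pathIncMatrix R n i j * (if j ∈ evenVertices n then 1 else 0) =
      if j = ⟨2 * (i / 2), hlt⟩ then 1 else 0 := fun j => by
    simp only [pathIncMatrix, evenVertices, of_apply, mem_filter, mem_univ, true_and,
      Fin.ext_iff, Fin.val_castSucc, Fin.val_succ, Nat.even_iff]
    split_ifs <;> first | omega | simp
  simp [mulVec, dotProduct, hterm]

end PathIncMatrix

theorem adjMatrix_pathGraph_add_two_mulVec_evenVertices {R : Type*} [Semiring R] {n : ℕ}
    (hn : Odd n) :
    ((pathGraph n).adjMatrix R + (2 : R) • 1) *ᵥ (fun j => if j ∈ evenVertices n then 1 else 0) =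
      fun _ => 2 := by
  rw [← pathIncMatrix_transpose_mul_self, ← mulVec_mulVec, pathIncMatrix_mulVec_evenVertices hn,
    pathIncMatrix_transpose_mulVec_one]

theorem posDef_adjMatrix_pathGraph_add_two {R : Type*} [Ring R] [PartialOrder R] [StarRing R]
    [StarOrderedRing R] [TrivialStar R] [NoZeroDivisors R] (n : ℕ) :
    ((pathGraph n).adjMatrix R + (2 : R) • 1).PosDef := by
  rw [← pathIncMatrix_transpose_mul_self, ← conjTranspose_eq_transpose_of_trivial]
  exact .conjTranspose_mul_self _ pathIncMatrix_mulVec_injective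

theorem two_mul_one_dotProduct_inv_mulVec_one {K : Type*} [Field K] [PartialOrder K] [StarRing K]
    [StarOrderedRing K] [TrivialStar K] {n : ℕ} (hn : Odd n) :
    2 * ((fun _ => 1) ⬝ᵥ ((pathGraph n).adjMatrix K + (2 : K) • 1)⁻¹ *ᵥ fun _ => 1) =
      (#(evenVertices n) : K) := by
  have := (posDef_adjMatrix_pathGraph_add_two (R := K) n).isUnit.invertible
  have hinv := inv_mulVec_eq_vec (adjMatrix_pathGraph_add_two_mulVec_evenVertices (R := K) hn).symm
  have htwo : (fun _ : Fin n => (2 : K)) = (2 : K) • fun _ => 1 := by ext; simp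
  rw [htwo, mulVec_smul] at hinv
  rw [← smul_eq_mul, ← dotProduct_smul, hinv]
  simp [dotProduct]

theorem indepNum_eq_card_of_isIndepSet {V : Type*} [Fintype V] {G : SimpleGraph V}
    {S : Finset V} (hS : G.IsIndepSet S) (hmax : ∀ T : Finset V, G.IsIndepSet T → #T ≤ #S) :
    indepNum G = #S := by
  have hbdd : ∀ m ∈ {m | ∃ T : Finset V, (∀ u ∈ T, ∀ v ∈ T, u ≠ v → ¬ G.Adj u v) ∧ #T = m},
      m ≤ #S := by
    rintro _ ⟨T, hT, rfl⟩
    exact hmax T hT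
  exact le_antisymm (csSup_le ⟨_, S, hS, rfl⟩ hbdd) (le_csSup ⟨_, hbdd⟩ ⟨S, hS, rfl⟩)

theorem card_evenVertices (n : ℕ) : #(evenVertices n) = (n + 1) / 2 := by
  rw [← card_fin ((n + 1) / 2)]
  refine card_nbij' (fun j => ⟨j / 2, by omega⟩) (fun t => ⟨2 * t, by omega⟩) ?_ ?_ ?_ ?_
  all_goals intro j; simp [evenVertices, Fin.ext_iff, Nat.even_iff]
  omega

theorem card_le_of_isIndepSet_pathGraph {n : ℕ} {T : Finset (Fin n)}
    (hT : (pathGraph n).IsIndepSet T) : #T ≤ (n + 1) / 2 := by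
  rw [← card_fin ((n + 1) / 2)]
  refine card_le_card_of_injOn (fun j => ⟨j / 2, by omega⟩) (fun _ _ => mem_coe.2 (mem_univ _)) ?_
  intro u hu v hv huv
  by_contra hne
  refine hT hu hv hne (pathGraph_adj.2 ?_)
  simp only [Fin.ext_iff] at huv hne
  omega

theorem isIndepSet_evenVertices (n : ℕ) : (pathGraph n).IsIndepSet (evenVertices n) := by
  intro u hu v hv _ hadj
  simp only [evenVertices, coe_filter, mem_univ, true_and, Set.mem_ofPred_eq, Nat.even_iff] at hu hv
  rw [pathGraph_adj] at hadj
  omega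

theorem indepNum_pathGraph (n : ℕ) : indepNum (pathGraph n) = (n + 1) / 2 := by
  rw [← card_evenVertices]
  exact indepNum_eq_card_of_isIndepSet (isIndepSet_evenVertices n)
    fun T hT => (card_le_of_isIndepSet_pathGraph hT).trans_eq (card_evenVertices n).symm

/-- Example 4.6: for the path P_{2k+1} with adjacency matrix A, A + 2I is positive
definite, 2·eᵀ(A+2I)⁻¹e = k+1, and α(P_{2k+1}) = k+1. -/
theorem stmt19 (k : ℕ) :
    ((SimpleGraph.pathGraph (2 * k + 1)).adjMatrix ℝ +
        (2 : ℝ) • (1 : Matrix (Fin (2 * k + 1)) (Fin (2 * k + 1)) ℝ)).PosDef ∧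
      2 * ((fun _ => (1 : ℝ)) ⬝ᵥ
          ((SimpleGraph.pathGraph (2 * k + 1)).adjMatrix ℝ +
            (2 : ℝ) • (1 : Matrix (Fin (2 * k + 1)) (Fin (2 * k + 1)) ℝ))⁻¹.mulVec
            fun _ => (1 : ℝ)) = (k : ℝ) + 1 ∧
      indepNum (SimpleGraph.pathGraph (2 * k + 1)) = k + 1 := by
  have hcard : #(evenVertices (2 * k + 1)) = k + 1 := by rw [card_evenVertices]; omega
  refine ⟨posDef_adjMatrix_pathGraph_add_two _, ?_, ?_⟩
  · rw [two_mul_one_dotProduct_inv_mulVec_one (odd_two_mul_add_one k), hcard, Nat.cast_succ]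
  · rw [indepNum_pathGraph]
    omega
end
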